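/- Let (X, τ) be a hereditarily normal T1 space such that X = ⋃_{i∈I} X_i, where each subspace X_i of (X, τ) satisfies ind X_i ≤ 0 (every point of X_i has a neighborhood basis in X_i of relatively clopen sets). Then τ = ⋂_{i∈I} τ(X_i) and, for each i ∈ I, the space (X, τ(X_i)) is hereditarily normal with ind (X, τ(X_i)) ≤ 0. -/

import Mathlib

/-- The Bing–Hanner extension `τ(M)` of a topology `τ` on `X` determined by a subset `M ⊆ X`:
its open sets are exactly the sets of the form `U ∪ K` with `U` a `τ`-open set and
`K ⊆ X \ M`. -/
def bingHanner {X : Type*} (τ : TopologicalSpace X) (M : Set X) : TopologicalSpace X where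
  IsOpen O := ∃ U K : Set X, τ.IsOpen U ∧ K ⊆ Mᶜ ∧ O = U ∪ K
  isOpen_univ := ⟨Set.univ, ∅, τ.isOpen_univ, by simp, by simp⟩
  isOpen_inter := by
    rintro s t ⟨U₁, K₁, hU₁, hK₁, rfl⟩ ⟨U₂, K₂, hU₂, hK₂, rfl⟩
    refine ⟨U₁ ∩ U₂, ((U₁ ∪ K₁) ∩ (U₂ ∪ K₂)) \ (U₁ ∩ U₂),
      τ.isOpen_inter _ _ hU₁ hU₂, ?_, ?_⟩
    · rintro x ⟨⟨h1, h2⟩, hn⟩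
      rcases h1 with h1 | h1
      · rcases h2 with h2 | h2
        · exact absurd ⟨h1, h2⟩ hn
        · exact hK₂ h2
      · exact hK₁ h1
    · have hsub : U₁ ∩ U₂ ⊆ (U₁ ∪ K₁) ∩ (U₂ ∪ K₂) :=
        fun x hx => ⟨Or.inl hx.1, Or.inl hx.2⟩
      exact (Set.union_diff_cancel hsub).symm
  isOpen_sUnion := by
    intro S hS
    choose U K hU hK hEq using hS
    refine ⟨⋃ s, ⋃ h : s ∈ S, U s h, ⋃ s, ⋃ h : s ∈ S, K s h, ?_, ?_, ?_⟩
    · letI := τ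
      exact isOpen_iUnion fun s => isOpen_iUnion fun h => hU s h
    · exact Set.iUnion_subset fun s => Set.iUnion_subset fun h => hK s h
    · ext x
      simp only [Set.mem_sUnion, Set.mem_union, Set.mem_iUnion]
      constructor
      · rintro ⟨s, hs, hx⟩
        rw [hEq s hs] at hx
        rcases hx with hx | hx
        · exact Or.inl ⟨s, hs, hx⟩
        · exact Or.inr ⟨s, hs, hx⟩
      · rintro (⟨s, hs, hx⟩ | ⟨s, hs, hx⟩)
        · exact ⟨s, hs, by rw [hEq s hs]; exact Or.inl hx⟩
        · exact ⟨s, hs, by rw [hEq s hs]; exact Or.inr hx⟩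

/-- `covDimLE t n` : the covering dimension of `(X, t)` is at most `n`, i.e. every finite
open cover admits a finite open refinement covering `X` in which any `n + 2` pairwise
distinct members have empty intersection. -/
def covDimLE {X : Type*} (t : TopologicalSpace X) (n : ℕ) : Prop :=
  ∀ C : Set (Set X), C.Finite → (∀ U ∈ C, t.IsOpen U) → ⋃₀ C = Set.univ →
    ∃ V : Set (Set X), V.Finite ∧ (∀ U ∈ V, t.IsOpen U) ∧ ⋃₀ V = Set.univ ∧
      (∀ U ∈ V, ∃ W ∈ C, U ⊆ W) ∧
      ∀ F : Finset (Set X), ↑F ⊆ V → F.card = n + 2 → ⋂₀ (F : Set (Set X)) = ∅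

/-- `IndLE0 t` : the large inductive dimension of `(Z, t)` is at most `0`, i.e. any two
disjoint closed sets are separated by a clopen set. -/
def IndLE0 {Z : Type*} (t : TopologicalSpace Z) : Prop :=
  ∀ A B : Set Z, @IsClosed Z t A → @IsClosed Z t B → Disjoint A B →
    ∃ U : Set Z, t.IsOpen U ∧ @IsClosed Z t U ∧ A ⊆ U ∧ U ∩ B = ∅

/-- `indLE0 t` : the small inductive dimension of `(Z, t)` is at most `0`, i.e. every point
has a neighborhood basis of clopen sets. -/
def indLE0 {Z : Type*} (t : TopologicalSpace Z) : Prop :=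
  ∀ (x : Z) (O : Set Z), t.IsOpen O → x ∈ O →
    ∃ U : Set Z, t.IsOpen U ∧ @IsClosed Z t U ∧ x ∈ U ∧ U ⊆ O

/-- `L` is a partition between `A` and `B` in `(X, t)`. -/
def isPartitionBetween {X : Type*} (t : TopologicalSpace X) (A B L : Set X) : Prop :=
  ∃ U V : Set X, t.IsOpen U ∧ t.IsOpen V ∧ Disjoint U V ∧ A ⊆ U ∧ B ⊆ V ∧ L = (U ∪ V)ᶜ

/-! A point outside `M` is isolated in `τ(M)`, while at a point of `M` the topologies `τ` and
`τ(M)` have the same neighbourhoods. Hence `τ` is recovered from the `τ(Xᵢ)` when the `Xᵢ` cover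
`X`, and complete normality passes from `τ` to `τ(M)`: the parts of two separated sets lying in
`M` are separated in `τ`, and the parts outside `M` are open. A relatively clopen subset `V` of
`M` and its complement `M \ V` are separated in `τ`, so hereditary normality gives disjoint open
`G ⊇ V` and `H ⊇ M \ V`; since `G ∪ H` covers `M`, the set `G` is clopen in `τ(M)`, which turns
clopen neighbourhood bases in `M` into clopen neighbourhood bases in `τ(M)`. -/

open Set Filter Topology

theorem disjoint_closure_image_val_compl {X : Type*} [TopologicalSpace X] {M : Set X}
    {V : Set M} (hV : IsClosed V) : Disjoint (closure (Subtype.val '' V)) (Subtype.val '' Vᶜ) := by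
  rw [disjoint_image_right, ← IsInducing.subtypeVal.closure_eq_preimage_closure_image,
    hV.closure_eq]
  exact disjoint_compl_right

theorem separatedNhds_image_val_of_isClopen {X : Type*} [TopologicalSpace X]
    [CompletelyNormalSpace X] {M : Set X} {V : Set M} (hV : IsClopen V) :
    SeparatedNhds (Subtype.val '' V) (Subtype.val '' Vᶜ) := by
  refine separatedNhds_iff_disjoint.2 (CompletelyNormalSpace.completely_normal
    (disjoint_closure_image_val_compl hV.isClosed) ?_)
  simpa using (disjoint_closure_image_val_compl hV.compl.isClosed).symm

section BingHanner

variable {X : Type*} [t : TopologicalSpace X]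

theorem bingHanner_le (M : Set X) : bingHanner t M ≤ t :=
  fun O hO => ⟨O, ∅, hO, empty_subset _, (union_empty O).symm⟩

theorem isOpen_bingHanner_of_subset_compl {M K : Set X} (hK : K ⊆ Mᶜ) :
    IsOpen[bingHanner t M] K :=
  ⟨∅, K, isOpen_empty, hK, (empty_union K).symm⟩

theorem isOpen_bingHanner_iff {M O : Set X} :
    IsOpen[bingHanner t M] O ↔ ∃ U, IsOpen U ∧ U ⊆ O ∧ O ∩ M ⊆ U := by
  constructor
  · rintro ⟨U, K, hU, hK, rfl⟩
    refine ⟨U, hU, subset_union_left, ?_⟩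
    rintro x ⟨hxU | hxK, hxM⟩
    exacts [hxU, absurd hxM (hK hxK)]
  · rintro ⟨U, hU, hUO, hOM⟩
    refine ⟨U, O \ U, hU, fun x hx hxM => hx.2 (hOM ⟨hx.1, hxM⟩), ?_⟩
    exact (union_sdiff_cancel hUO).symm

theorem nhds_bingHanner_of_mem {M : Set X} {x : X} (hx : x ∈ M) :
    @nhds X (bingHanner t M) x = 𝓝 x := by
  refine le_antisymm (nhds_mono (bingHanner_le M)) ?_
  refine (@nhds_basis_opens X (bingHanner t M) x).ge_iff.2 fun O ⟨hxO, hO⟩ => ?_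
  obtain ⟨U, hU, hUO, hOM⟩ := isOpen_bingHanner_iff.1 hO
  exact mem_of_superset (hU.mem_nhds (hOM ⟨hxO, hx⟩)) hUO

theorem nhdsSet_bingHanner_of_subset {M s : Set X} (hs : s ⊆ M) :
    @nhdsSet X (bingHanner t M) s = 𝓝ˢ s := by
  simp only [nhdsSet]
  rw [image_congr fun x hx => nhds_bingHanner_of_mem (hs hx)]

theorem mem_closure_bingHanner_iff {M s : Set X} {x : X} (hx : x ∈ M) :
    x ∈ closure[bingHanner t M] s ↔ x ∈ closure s := by
  rw [@mem_closure_iff_clusterPt X (bingHanner t M), mem_closure_iff_clusterPt]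
  unfold ClusterPt
  rw [nhds_bingHanner_of_mem hx]

theorem isOpen_iff_forall_isOpen_bingHanner {ι : Type*} {M : ι → Set X}
    (hM : ⋃ i, M i = univ) {O : Set X} :
    IsOpen O ↔ ∀ i, IsOpen[bingHanner t (M i)] O := by
  refine ⟨fun hO i => hO.mono (bingHanner_le (M i)), fun hO => isOpen_iff_mem_nhds.2 ?_⟩
  intro x hx
  obtain ⟨i, hi⟩ := mem_iUnion.1 (hM.symm ▸ mem_univ x : x ∈ ⋃ i, M i)
  rw [← nhds_bingHanner_of_mem hi]
  exact @IsOpen.mem_nhds X (bingHanner t (M i)) _ _ (hO i) hx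

theorem isClosed_bingHanner_of_subset_union {M G H : Set X} (hH : IsOpen H)
    (hGH : Disjoint G H) (hM : M ⊆ G ∪ H) : IsClosed[bingHanner t M] G := by
  refine @IsClosed.mk X (bingHanner t M) G (isOpen_bingHanner_iff.2 ⟨H, hH, ?_, ?_⟩)
  · exact hGH.subset_compl_left
  · exact fun x ⟨hxG, hxM⟩ => (hM hxM).resolve_left hxG

theorem completelyNormalSpace_bingHanner [CompletelyNormalSpace X] (M : Set X) :
    @CompletelyNormalSpace X (bingHanner t M) := by
  refine @CompletelyNormalSpace.mk X (bingHanner t M) fun s u hsu hus => ?_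
  have hclosure {x : X} {v : Set X} (hxM : x ∈ M) (hx : x ∈ closure (v ∩ M)) :
      x ∈ closure[bingHanner t M] v :=
    @closure_mono X (bingHanner t M) _ _ inter_subset_left x
      ((mem_closure_bingHanner_iff hxM).2 hx)
  have hinM : Disjoint (@nhdsSet X (bingHanner t M) (s ∩ M))
      (@nhdsSet X (bingHanner t M) (u ∩ M)) := by
    rw [nhdsSet_bingHanner_of_subset inter_subset_right,
      nhdsSet_bingHanner_of_subset inter_subset_right]
    refine CompletelyNormalSpace.completely_normal ?_ ?_
    · exact disjoint_left.2 fun x hx hxu => disjoint_left.1 hsu (hclosure hxu.2 hx) hxu.1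
    · exact disjoint_right.2 fun x hx hxs => disjoint_right.1 hus (hclosure hxs.2 hx) hxs.1
  have hdiff (v : Set X) : @nhdsSet X (bingHanner t M) (v \ M) = 𝓟 (v \ M) :=
    @IsOpen.nhdsSet_eq X (bingHanner t M) _ (isOpen_bingHanner_of_subset_compl fun _ hx => hx.2)
  rw [← inter_union_sdiff s M, ← inter_union_sdiff u M, @nhdsSet_union X (bingHanner t M),
    @nhdsSet_union X (bingHanner t M), hdiff, hdiff]
  simp only [disjoint_sup_left, disjoint_sup_right]
  refine ⟨⟨hinM, ?_⟩, ?_, ?_⟩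
  · refine (@disjoint_principal_nhdsSet X (bingHanner t M) _ _).2 ?_
    exact hsu.mono (@closure_mono X (bingHanner t M) _ _ sdiff_subset) inter_subset_left
  · refine (@disjoint_nhdsSet_principal X (bingHanner t M) _ _).2 ?_
    exact hus.mono inter_subset_left (@closure_mono X (bingHanner t M) _ _ sdiff_subset)
  · refine disjoint_principal_principal.2 ?_
    exact hsu.mono ((@subset_closure X (bingHanner t M) _).trans' sdiff_subset) sdiff_subset

theorem t5Space_bingHanner [T5Space X] (M : Set X) : @T5Space X (bingHanner t M) :=
  @T5Space.mk X (bingHanner t M) (t1Space_antitone (bingHanner_le M) inferInstance)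
    (completelyNormalSpace_bingHanner M)

theorem indLE0_bingHanner [T5Space X] {M : Set X}
    (hM : indLE0 (TopologicalSpace.induced (Subtype.val : M → X) t)) :
    indLE0 (bingHanner t M) := by
  intro x O hO hxO
  by_cases hx : x ∈ M
  · obtain ⟨U, hU, hUO, hOM⟩ := isOpen_bingHanner_iff.1 hO
    have hxU : x ∈ U := hOM ⟨hxO, hx⟩
    obtain ⟨V, hVo, hVc, hxV, hVU⟩ :=
      hM ⟨x, hx⟩ (Subtype.val ⁻¹' U) (hU.preimage continuous_subtype_val) hxU
    obtain ⟨G, H, hG, hH, hVG, hVH, hGH⟩ := separatedNhds_image_val_of_isClopen ⟨hVc, hVo⟩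
    have hMGH : M ⊆ (G ∩ U) ∪ H := by
      intro y hy
      by_cases hyV : (⟨y, hy⟩ : M) ∈ V
      · exact Or.inl ⟨hVG ⟨_, hyV, rfl⟩, hVU hyV⟩
      · exact Or.inr (hVH ⟨_, hyV, rfl⟩)
    refine ⟨G ∩ U, (hG.inter hU).mono (bingHanner_le M), ?_, ⟨hVG ⟨_, hxV, rfl⟩, hxU⟩,
      inter_subset_right.trans hUO⟩
    exact isClosed_bingHanner_of_subset_union hH (hGH.mono_left inter_subset_left) hMGH
  · refine ⟨{x}, isOpen_bingHanner_of_subset_compl (singleton_subset_iff.2 hx), ?_, rfl,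
      singleton_subset_iff.2 hxO⟩
    exact (isClosed_singleton (x := x)).mono (bingHanner_le M)

end BingHanner

/-- If `(X, τ)` is hereditarily normal `T₁` and `X = ⋃_{i ∈ I} X_i`
with each subspace `X_i` satisfying `ind X_i ≤ 0`, then `τ = ⋂_{i ∈ I} τ(X_i)` and each
`(X, τ(X_i))` is hereditarily normal with `ind ≤ 0`. -/
theorem hereditarilyNormal_indZero_decomposition {X : Type*} (τ : TopologicalSpace X)
    (hT5 : @T5Space X τ) {I : Type*} (Xi : I → Set X)
    (hcover : (⋃ i, Xi i) = Set.univ)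
    (hind : ∀ i, indLE0 (TopologicalSpace.induced (Subtype.val : (Xi i) → X) τ)) :
    (∀ O : Set X, τ.IsOpen O ↔ ∀ i, (bingHanner τ (Xi i)).IsOpen O) ∧
    ∀ i, @T5Space X (bingHanner τ (Xi i)) ∧ indLE0 (bingHanner τ (Xi i)) := by
  let := τ
  exact ⟨fun _ => isOpen_iff_forall_isOpen_bingHanner hcover,
    fun i => ⟨t5Space_bingHanner (Xi i), indLE0_bingHanner (hind i)⟩⟩
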